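/- Under the conditions of the association lemma (independent L̄₁, L̄₂ with CCDFs e^{−Λⱼ((0,l])}, densities λⱼ, association event {L̄₂ ≥ Ω L̄₁} with probability A₁ > 0), the conditional PDF of the serving pathloss L* = L̄₁ given the association event is f(l) = (1/A₁) e^{−Λ₂((0,Ωl]) − Λ₁((0,l])} λ₁(l) for l > 0. -/

import Mathlib

/-!
The tail `exp (-Λ l)` of each pathloss forces `λ` to be integrable on every `[0, l]`, so
`x ↦ exp (-Λ x)` is absolutely continuous with a.e. derivative `-exp (-Λ x) λ x`; hence the law
of each pathloss has density `exp (-Λ) λ` on `(0, ∞)`, and in particular no atoms. By independence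
and Fubini, `P(Ω L̄₁ ≤ L̄₂, L̄₁ ∈ S) = ∫_{S ∩ (0, ∞)} e^{-Λ₂(Ω x)} e^{-Λ₁(x)} λ₁(x) dx`; taking
`S = (0, ∞)` gives `A₁` and `S = (0, l]` the numerator of the conditional CDF.
-/

open Real MeasureTheory ProbabilityTheory Set Filter
open scoped ENNReal NNReal

theorem LipschitzOnWith.comp_absolutelyContinuousOnInterval {X Y : Type*} [PseudoMetricSpace X]
    [PseudoMetricSpace Y] {g : X → Y} {K : ℝ≥0} {s : Set X} {f : ℝ → X} {a b : ℝ}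
    (hg : LipschitzOnWith K g s) (hfs : MapsTo f (uIcc a b) s)
    (hf : AbsolutelyContinuousOnInterval f a b) :
    AbsolutelyContinuousOnInterval (g ∘ f) a b := by
  unfold AbsolutelyContinuousOnInterval at hf ⊢
  refine squeeze_zero' (.of_forall fun _ ↦ Finset.sum_nonneg fun _ _ ↦ dist_nonneg) ?_
    (by simpa using hf.const_mul (K : ℝ))
  rw [eventually_inf_principal]
  filter_upwards with E hE
  rw [Finset.mul_sum]
  gcongr with i hi
  exact hg.dist_le_mul _ (hfs (hE.1 i hi).1) _ (hfs (hE.1 i hi).2)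

theorem ContDiff.comp_absolutelyContinuousOnInterval {g f : ℝ → ℝ} {a b : ℝ}
    (hg : ContDiff ℝ 1 g) (hf : AbsolutelyContinuousOnInterval f a b) :
    AbsolutelyContinuousOnInterval (g ∘ f) a b := by
  obtain ⟨C, hC⟩ := hf.exists_bound
  obtain ⟨K, hK⟩ := hg.contDiffOn.exists_lipschitzOnWith (s := Icc (-C) C) (by decide)
    (convex_Icc _ _) isCompact_Icc
  exact hK.comp_absolutelyContinuousOnInterval (fun x hx ↦ abs_le.1 (hC x hx)) hf

section ExpNegIntegral

variable {f : ℝ → ℝ} {a b c d : ℝ}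

theorem absolutelyContinuousOnInterval_exp_neg_integral
    (hf : IntervalIntegrable f volume c d) (ha : a ∈ uIcc c d) (hb : b ∈ uIcc c d) :
    AbsolutelyContinuousOnInterval (fun x ↦ exp (-∫ t in c..x, f t)) a b :=
  (contDiff_exp.comp_absolutelyContinuousOnInterval
    (hf.absolutelyContinuousOnInterval_intervalIntegral left_mem_uIcc).neg).mono
    (uIcc_subset_uIcc ha hb)

theorem integral_exp_neg_integral_mul
    (hf : IntervalIntegrable f volume c d) (ha : a ∈ uIcc c d) (hb : b ∈ uIcc c d) :
    ∫ x in a..b, exp (-∫ t in c..x, f t) * f x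
      = exp (-∫ t in c..a, f t) - exp (-∫ t in c..b, f t) := by
  have hderiv : ∀ᵐ x, x ∈ uIoc a b →
      deriv (fun x ↦ exp (-∫ t in c..x, f t)) x = -(exp (-∫ t in c..x, f t) * f x) := by
    filter_upwards [hf.ae_hasDerivAt_integral] with x hx hxab
    have hxcd : x ∈ uIcc c d := uIcc_subset_uIcc ha hb (uIoc_subset_uIcc hxab)
    simpa using ((hx hxcd c left_mem_uIcc).fun_neg.exp).deriv
  have hFTC := (absolutelyContinuousOnInterval_exp_neg_integral hf ha hb).integral_deriv_eq_sub
  rw [intervalIntegral.integral_congr_ae hderiv, intervalIntegral.integral_neg] at hFTC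
  linarith

end ExpNegIntegral

section Tail

variable {μ : Measure ℝ} {Lam lam : ℝ → ℝ}

theorem monotoneOn_of_measureReal_Ioi_eq_exp [IsFiniteMeasure μ]
    (htail : ∀ l, 0 ≤ l → μ.real (Ioi l) = exp (-Lam l)) : MonotoneOn Lam (Ici 0) := by
  intro a ha b hb hab
  have hanti := measureReal_mono (μ := μ) (Ioi_subset_Ioi hab)
  rw [htail a ha, htail b hb, exp_le_exp] at hanti
  linarith

theorem intervalIntegrable_of_measureReal_Ioi_eq_exp [IsProbabilityMeasure μ]
    (hLam : ∀ l, 0 ≤ l → Lam l = ∫ t in (0:ℝ)..l, lam t)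
    (htail : ∀ l, 0 ≤ l → μ.real (Ioi l) = exp (-Lam l)) {l : ℝ} (hl : 0 ≤ l) :
    IntervalIntegrable lam volume 0 l := by
  by_contra hnot
  -- `Lam` would then take the junk value `0` on `[l, ∞)`, so the CDF of `μ` could not tend to `1`.
  have hcdf : ∀ᶠ x in atTop, cdf μ x = 0 := by
    filter_upwards [eventually_ge_atTop l] with x hx
    have hLx : Lam x = 0 := by
      rw [hLam x (hl.trans hx)]
      exact intervalIntegral.integral_undef fun h ↦
        hnot (h.mono_set (uIcc_subset_uIcc left_mem_uIcc ⟨by simp [hl], by simp [hx]⟩))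
    rw [cdf_eq_real, ← compl_Ioi, probReal_compl_eq_one_sub measurableSet_Ioi,
      htail x (hl.trans hx), hLx, neg_zero, exp_zero, sub_self]
  exact zero_ne_one <| tendsto_nhds_unique (tendsto_const_nhds.congr' (hcdf.mono fun _ h ↦ h.symm))
    (tendsto_cdf_atTop μ)

theorem measure_Ioc_eq_setLIntegral_of_measureReal_Ioi_eq_exp [IsProbabilityMeasure μ]
    (hlam : ∀ x, 0 ≤ lam x) (hLam : ∀ l, 0 ≤ l → Lam l = ∫ t in (0:ℝ)..l, lam t)
    (htail : ∀ l, 0 ≤ l → μ.real (Ioi l) = exp (-Lam l)) {a b : ℝ} (ha : 0 ≤ a) (hab : a ≤ b) :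
    μ (Ioc a b) = ∫⁻ t in Ioc a b, ENNReal.ofReal (exp (-Lam t) * lam t) := by
  have hint := intervalIntegrable_of_measureReal_Ioi_eq_exp hLam htail (ha.trans hab)
  have ha' : a ∈ uIcc 0 b := by simp [uIcc_of_le (ha.trans hab), ha, hab]
  have hdens : IntegrableOn (fun t ↦ exp (-∫ s in (0:ℝ)..t, lam s) * lam t) (Ioc a b) :=
    (intervalIntegrable_iff_integrableOn_Ioc_of_le hab).1 <|
      (hint.mono_set (uIcc_subset_uIcc ha' right_mem_uIcc)).continuousOn_mul
        (absolutelyContinuousOnInterval_exp_neg_integral hint ha' right_mem_uIcc).continuousOn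
  have hnonneg : ∀ t, 0 ≤ exp (-∫ s in (0:ℝ)..t, lam s) * lam t :=
    fun t ↦ mul_nonneg (exp_pos _).le (hlam t)
  rw [setLIntegral_congr_fun measurableSet_Ioc fun t ht ↦ by rw [hLam t (ha.trans ht.1.le)],
    ← ofReal_integral_eq_lintegral_ofReal hdens (.of_forall hnonneg),
    ← intervalIntegral.integral_of_le hab, integral_exp_neg_integral_mul hint ha' right_mem_uIcc,
    ← hLam a ha, ← hLam b (ha.trans hab), ← htail a ha, ← htail b (ha.trans hab),
    ← measureReal_sdiff (Ioi_subset_Ioi hab) measurableSet_Ioi, Ioi_sdiff_Ioi, ofReal_measureReal]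

theorem eq_withDensity_of_measureReal_Ioi_eq_exp [IsProbabilityMeasure μ]
    (hlam : ∀ x, 0 ≤ lam x) (hLam : ∀ l, 0 ≤ l → Lam l = ∫ t in (0:ℝ)..l, lam t)
    (htail : ∀ l, 0 ≤ l → μ.real (Ioi l) = exp (-Lam l)) :
    μ = (volume.restrict (Ioi 0)).withDensity fun t ↦ ENNReal.ofReal (exp (-Lam t) * lam t) := by
  have hpos : μ (Ioi 0)ᶜ = 0 := by
    rw [prob_compl_eq_zero_iff measurableSet_Ioi, ← ofReal_measureReal, htail 0 le_rfl,
      hLam 0 le_rfl, intervalIntegral.integral_same, neg_zero, exp_zero, ENNReal.ofReal_one]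
  refine Measure.ext_of_Ioc' μ _ (fun _ _ _ ↦ measure_ne_top μ _) fun a b _ ↦ ?_
  rw [← measure_inter_conull hpos, withDensity_apply _ measurableSet_Ioc,
    Measure.restrict_restrict measurableSet_Ioc, Ioc_inter_Ioi]
  rcases le_total b (a ⊔ 0) with hb | hb
  · simp [Ioc_eq_empty_of_le hb]
  · exact measure_Ioc_eq_setLIntegral_of_measureReal_Ioi_eq_exp hlam hLam htail le_sup_right hb

theorem measure_Ici_eq_exp_of_measureReal_Ioi_eq_exp [IsProbabilityMeasure μ]
    (hlam : ∀ x, 0 ≤ lam x) (hLam : ∀ l, 0 ≤ l → Lam l = ∫ t in (0:ℝ)..l, lam t)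
    (htail : ∀ l, 0 ≤ l → μ.real (Ioi l) = exp (-Lam l)) {c : ℝ} (hc : 0 ≤ c) :
    μ (Ici c) = ENNReal.ofReal (exp (-Lam c)) := by
  have hatom : μ {c} = 0 := by
    rw [eq_withDensity_of_measureReal_Ioi_eq_exp hlam hLam htail]
    exact (withDensity_absolutelyContinuous _ _).trans
      (Measure.absolutelyContinuous_of_le Measure.restrict_le_self) Real.volume_singleton
  rw [← measure_congr (Ioi_ae_eq_Ici' hatom), ← ofReal_measureReal, htail c hc]

end Tail

theorem ProbabilityTheory.IndepFun.measure_preimage_eq_lintegral {Ω β γ : Type*}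
    [MeasurableSpace Ω] [MeasurableSpace β] [MeasurableSpace γ] {P : Measure Ω}
    [IsFiniteMeasure P] {X : Ω → β} {Y : Ω → γ} (hXY : IndepFun X Y P) (hX : Measurable X)
    (hY : Measurable Y) {T : Set (β × γ)} (hT : MeasurableSet T) :
    P ((fun ω ↦ (X ω, Y ω)) ⁻¹' T) = ∫⁻ x, P.map Y (Prod.mk x ⁻¹' T) ∂P.map X := by
  rw [← Measure.map_apply (hX.prodMk hY) hT,
    (indepFun_iff_map_prod_eq_prod_map_map hX.aemeasurable hY.aemeasurable).1 hXY,
    Measure.prod_apply hT]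

theorem ProbabilityTheory.IndepFun.measure_mul_le_inter_preimage_eq_setLIntegral
    {Ω : Type*} [MeasurableSpace Ω] {P : Measure Ω} [IsFiniteMeasure P] {X Y : Ω → ℝ}
    (hXY : IndepFun X Y P) (hX : Measurable X) (hY : Measurable Y) {s : Set ℝ} {f : ℝ → ℝ≥0∞}
    (hf : AEMeasurable f (volume.restrict s)) (hlaw : P.map X = (volume.restrict s).withDensity f)
    (c : ℝ) {S : Set ℝ} (hS : MeasurableSet S) :
    P ({ω | c * X ω ≤ Y ω} ∩ X ⁻¹' S) = ∫⁻ x in s ∩ S, f x * P.map Y (Ici (c * x)) := by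
  have hT : MeasurableSet {p : ℝ × ℝ | c * p.1 ≤ p.2 ∧ p.1 ∈ S} :=
    (measurableSet_le (measurable_const.mul measurable_fst) measurable_snd).inter
      (measurable_fst hS)
  have hslice : ∀ x, P.map Y (Prod.mk x ⁻¹' {p : ℝ × ℝ | c * p.1 ≤ p.2 ∧ p.1 ∈ S})
      = S.indicator (fun x ↦ P.map Y (Ici (c * x))) x := by
    intro x
    by_cases hx : x ∈ S <;> simp [hx, Ici_def]
  calc P ({ω | c * X ω ≤ Y ω} ∩ X ⁻¹' S)
      = ∫⁻ x in S, P.map Y (Ici (c * x)) ∂P.map X := by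
        rw [← lintegral_indicator hS, ← lintegral_congr hslice,
          ← hXY.measure_preimage_eq_lintegral hX hY hT]
        rfl
    _ = _ := by
        have hanti : Antitone fun y ↦ P.map Y (Ici y) :=
          fun _ _ h ↦ measure_mono (Ici_subset_Ici.2 h)
        have hg : Measurable fun x ↦ P.map Y (Ici (c * x)) :=
          hanti.measurable.comp (measurable_const_mul c)
        rw [hlaw, restrict_withDensity hS, lintegral_withDensity_eq_lintegral_mul₀
          (hf.mono_measure Measure.restrict_le_self) hg.aemeasurable,
          Measure.restrict_restrict hS, inter_comm]
        rfl

theorem measureReal_mul_le_inter_preimage_eq_setIntegral {Ω : Type*} [MeasurableSpace Ω]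
    {P : Measure Ω} [IsProbabilityMeasure P] {L1 L2 : Ω → ℝ} (hIndep : IndepFun L1 L2 P)
    (hMeas1 : Measurable L1) (hMeas2 : Measurable L2) {Lam1 Lam2 lam1 lam2 : ℝ → ℝ}
    (hlam1 : ∀ x, 0 ≤ lam1 x) (hlam2 : ∀ x, 0 ≤ lam2 x) (hlam1m : Measurable lam1)
    (hLam1 : ∀ l, 0 ≤ l → Lam1 l = ∫ t in (0:ℝ)..l, lam1 t)
    (hLam2 : ∀ l, 0 ≤ l → Lam2 l = ∫ t in (0:ℝ)..l, lam2 t)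
    (htail1 : ∀ l, 0 ≤ l → (P.map L1).real (Ioi l) = exp (-Lam1 l))
    (htail2 : ∀ l, 0 ≤ l → (P.map L2).real (Ioi l) = exp (-Lam2 l))
    {Om : ℝ} (hOm : 0 < Om) {S : Set ℝ} (hS : MeasurableSet S) :
    P.real ({ω | Om * L1 ω ≤ L2 ω} ∩ L1 ⁻¹' S)
      = ∫ x in Ioi 0 ∩ S, exp (-Lam2 (Om * x) - Lam1 x) * lam1 x := by
  have := Measure.isProbabilityMeasure_map (μ := P) hMeas1.aemeasurable
  have := Measure.isProbabilityMeasure_map (μ := P) hMeas2.aemeasurable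
  have hLam1m : AEMeasurable Lam1 (volume.restrict (Ioi 0)) :=
    aemeasurable_restrict_of_monotoneOn measurableSet_Ioi
      ((monotoneOn_of_measureReal_Ioi_eq_exp htail1).mono Ioi_subset_Ici_self)
  have hLam2m : AEMeasurable (fun x ↦ Lam2 (Om * x)) (volume.restrict (Ioi 0)) :=
    aemeasurable_restrict_of_monotoneOn measurableSet_Ioi fun a ha b hb hab ↦
      monotoneOn_of_measureReal_Ioi_eq_exp htail2 (mul_pos hOm ha).le (mul_pos hOm hb).le
        (mul_le_mul_of_nonneg_left hab hOm.le)
  have hdens1 : AEMeasurable (fun x ↦ exp (-Lam1 x) * lam1 x) (volume.restrict (Ioi 0)) :=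
    (measurable_exp.comp_aemeasurable hLam1m.neg).mul hlam1m.aemeasurable
  have hdens : AEMeasurable (fun x ↦ exp (-Lam2 (Om * x) - Lam1 x) * lam1 x)
      (volume.restrict (Ioi 0)) :=
    (measurable_exp.comp_aemeasurable (hLam2m.neg.sub hLam1m)).mul hlam1m.aemeasurable
  rw [measureReal_def, hIndep.measure_mul_le_inter_preimage_eq_setLIntegral hMeas1 hMeas2
      hdens1.ennreal_ofReal (eq_withDensity_of_measureReal_Ioi_eq_exp hlam1 hLam1 htail1) Om hS,
    integral_eq_lintegral_of_nonneg_ae (.of_forall fun x ↦ mul_nonneg (exp_pos _).le (hlam1 x))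
      (hdens.aestronglyMeasurable.mono_set inter_subset_left)]
  congr 1
  refine setLIntegral_congr_fun (measurableSet_Ioi.inter hS) fun x hx ↦ ?_
  rw [measure_Ici_eq_exp_of_measureReal_Ioi_eq_exp hlam2 hLam2 htail2 (mul_pos hOm hx.1).le,
    mul_comm, ← ENNReal.ofReal_mul (exp_pos _).le, sub_eq_add_neg, exp_add]
  ring_nf

theorem serving_pathloss_conditional_pdf_general
    {α : Type*} [MeasurableSpace α] (P : Measure α) [IsProbabilityMeasure P]
    (L1 L2 : α → ℝ) (hMeas1 : Measurable L1) (hMeas2 : Measurable L2)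
    (hIndep : IndepFun L1 L2 P)
    (Lam1 Lam2 lam1 lam2 : ℝ → ℝ)
    (hlam1 : ∀ x, 0 ≤ lam1 x) (hlam2 : ∀ x, 0 ≤ lam2 x)
    (hlam1m : Measurable lam1)
    (hLam1 : ∀ l : ℝ, 0 ≤ l → Lam1 l = ∫ t in (0:ℝ)..l, lam1 t)
    (hLam2 : ∀ l : ℝ, 0 ≤ l → Lam2 l = ∫ t in (0:ℝ)..l, lam2 t)
    (hccdf1 : ∀ l : ℝ, 0 ≤ l → (P {ω | l < L1 ω}).toReal = Real.exp (-Lam1 l))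
    (hccdf2 : ∀ l : ℝ, 0 ≤ l → (P {ω | l < L2 ω}).toReal = Real.exp (-Lam2 l))
    (Om : ℝ) (hOm : 0 < Om)
    (A1 : ℝ)
    (hA1 : A1 = ∫ l in Set.Ioi (0:ℝ),
        Real.exp (-Lam2 (Om * l) - Lam1 l) * lam1 l) :
    ∀ l : ℝ, 0 < l →
      ((P[|{ω | Om * L1 ω ≤ L2 ω}]) {ω | L1 ω ≤ l}).toReal
        = (1 / A1) * ∫ t in (0:ℝ)..l,
            Real.exp (-Lam2 (Om * t) - Lam1 t) * lam1 t := by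
  intro l hl
  have htail1 : ∀ l, 0 ≤ l → (P.map L1).real (Ioi l) = exp (-Lam1 l) := fun l hl ↦
    (map_measureReal_apply hMeas1 measurableSet_Ioi).trans (hccdf1 l hl)
  have htail2 : ∀ l, 0 ≤ l → (P.map L2).real (Ioi l) = exp (-Lam2 l) := fun l hl ↦
    (map_measureReal_apply hMeas2 measurableSet_Ioi).trans (hccdf2 l hl)
  have hjoint : ∀ S, MeasurableSet S → ∫ x in Ioi 0 ∩ S, exp (-Lam2 (Om * x) - Lam1 x) * lam1 x
      = P.real ({ω | Om * L1 ω ≤ L2 ω} ∩ L1 ⁻¹' S) := fun S hS ↦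
    (measureReal_mul_le_inter_preimage_eq_setIntegral hIndep hMeas1 hMeas2 hlam1 hlam2 hlam1m
      hLam1 hLam2 htail1 htail2 hOm hS).symm
  have hE : MeasurableSet {ω | Om * L1 ω ≤ L2 ω} :=
    measurableSet_le (measurable_const.mul hMeas1) hMeas2
  rw [cond_apply hE, ENNReal.toReal_mul,
    ENNReal.toReal_inv, intervalIntegral.integral_of_le hl.le, hA1, ← Ioi_inter_Iic,
    hjoint _ measurableSet_Iic, ← inter_univ (Ioi 0), hjoint _ .univ, preimage_univ, inter_univ,
    one_div]
  rfl

/-- Lemma 4: the conditional distribution of the serving pathloss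
`L* = L̄₁` given association to tier 1 (the event `{L̄₂ ≥ Ω L̄₁}`) has density
`f(l) = (1/A₁) e^{-Λ₂((0,Ωl]) - Λ₁((0,l])} λ₁(l)`, expressed through its CDF. -/
theorem serving_pathloss_conditional_pdf
    {α : Type*} [MeasurableSpace α] (P : Measure α) [IsProbabilityMeasure P]
    (L1 L2 : α → ℝ) (hMeas1 : Measurable L1) (hMeas2 : Measurable L2)
    (hIndep : IndepFun L1 L2 P)
    (hPos1 : ∀ᵐ ω ∂P, 0 < L1 ω) (hPos2 : ∀ᵐ ω ∂P, 0 < L2 ω)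
    (Lam1 Lam2 lam1 lam2 : ℝ → ℝ)
    (hlam1 : ∀ x, 0 ≤ lam1 x) (hlam2 : ∀ x, 0 ≤ lam2 x)
    (hlam1m : Measurable lam1) (hlam2m : Measurable lam2)
    (hLam1 : ∀ l : ℝ, 0 ≤ l → Lam1 l = ∫ t in (0:ℝ)..l, lam1 t)
    (hLam2 : ∀ l : ℝ, 0 ≤ l → Lam2 l = ∫ t in (0:ℝ)..l, lam2 t)
    (hccdf1 : ∀ l : ℝ, 0 ≤ l → (P {ω | l < L1 ω}).toReal = Real.exp (-Lam1 l))
    (hccdf2 : ∀ l : ℝ, 0 ≤ l → (P {ω | l < L2 ω}).toReal = Real.exp (-Lam2 l))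
    (Om : ℝ) (hOm : 0 < Om)
    (A1 : ℝ)
    (hA1 : A1 = ∫ l in Set.Ioi (0:ℝ),
        Real.exp (-Lam2 (Om * l) - Lam1 l) * lam1 l)
    (hA1pos : 0 < A1) :
    ∀ l : ℝ, 0 < l →
      ((P[|{ω | Om * L1 ω ≤ L2 ω}]) {ω | L1 ω ≤ l}).toReal
        = (1 / A1) * ∫ t in (0:ℝ)..l,
            Real.exp (-Lam2 (Om * t) - Lam1 t) * lam1 t :=
  serving_pathloss_conditional_pdf_general P L1 L2 hMeas1 hMeas2 hIndep Lam1 Lam2 lam1 lam2 hlam1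
    hlam2 hlam1m hLam1 hLam2 hccdf1 hccdf2 Om hOm A1 hA1
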